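/- Let μ and ν be fully supported probability measures on [q]^V (V finite with N vertices, q ≥ 3), let P and Q be the Glauber dynamics for μ and ν, and let X ∼ μ and Y ∼ ν. If P is contracting with rate κ ∈ [0,1) with respect to the Hamming distance d_H (for all σ, τ there exists a coupling of P(σ,·) and P(τ,·) whose expected Hamming distance is at most κ·d_H(σ,τ)), then for every function h : [q]^V → ℝ, |E h(X) − E h(Y)| ≤ (‖L(h)‖_∞/(N(1−κ))) · E[‖T(Y)‖₁], where ‖T(σ)‖₁ := ∑_{v∈V} T_v(σ). -/

import Mathlib

/-!
Stein's method along the Glauber dynamics `P` of `μ`. Since `μ` is `P`-stationary,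
`E_μ f = E_μ (P f)`; since `ν` is stationary for its own dynamics `Q`,
`E_ν f - E_ν (P f) = E_ν ((Q - P) f)`, and `Q` and `P` differ only through the conditional spin
laws at the resampled site, so this is at most `L(f) · E_ν ‖T‖₁ / N`. The coupling contraction
multiplies the Hamming-Lipschitz constant of `Pⁿ h` by `κⁿ`; iterating and summing the geometric
series gives the bound, up to a remainder `|E_μ Pⁿ h - E_ν Pⁿ h| ≤ κⁿ L N` that vanishes as `n → ∞`.
-/

noncomputable section
attribute [local instance] Classical.propDecidable

open Finset

variable {V : Type*}

/-- A probability measure on a finite set. -/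
def IsProbMeasure {Ω : Type*} [Fintype Ω] (μ : Ω → ℝ) : Prop :=
  (∀ x, 0 ≤ μ x) ∧ ∑ x, μ x = 1

/-- `γ` is a coupling of `μ₁` and `μ₂`. -/
def IsCoupling {Ω : Type*} [Fintype Ω] (γ : Ω × Ω → ℝ) (μ₁ μ₂ : Ω → ℝ) : Prop :=
  (∀ p, 0 ≤ γ p) ∧ (∀ a, ∑ b, γ (a, b) = μ₁ a) ∧ (∀ b, ∑ a, γ (a, b) = μ₂ b)

/-- The Hamming distance between two configurations (as a real number). -/
def hamming [Fintype V] {q : ℕ} (σ τ : V → Fin q) : ℝ :=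
  ((Finset.univ.filter fun v => σ v ≠ τ v).card : ℝ)

/-- The Lipschitz constant of `h` in the coordinate `v`. -/
def Lv [Fintype V] {q : ℕ} (h : (V → Fin q) → ℝ) (v : V) : ℝ :=
  sSup {d : ℝ | ∃ σ τ : V → Fin q, (∀ w, w ≠ v → σ w = τ w) ∧ d = |h σ - h τ|}

/-- `‖L(h)‖_∞`, the maximum coordinatewise Lipschitz constant of `h`. -/
def Lnorm [Fintype V] {q : ℕ} (h : (V → Fin q) → ℝ) : ℝ :=
  sSup {d : ℝ | ∃ v : V, d = Lv h v}

/-- The conditional spin distribution `μ_v(k | σ)`. -/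
def condSpin [Fintype V] {q : ℕ} (μ : (V → Fin q) → ℝ) (v : V)
    (σ : V → Fin q) (k : Fin q) : ℝ :=
  μ (Function.update σ v k) / ∑ k' : Fin q, μ (Function.update σ v k')

/-- The Glauber dynamics transition matrix for the measure `μ` on `[q]^V`. -/
def glauber [Fintype V] {q : ℕ} (μ : (V → Fin q) → ℝ) (σ τ : V → Fin q) : ℝ :=
  (Fintype.card V : ℝ)⁻¹ *
    ∑ v : V, if ∀ w, w ≠ v → τ w = σ w then condSpin μ v σ (τ v) else 0

/-- Total variation distance between two measures on a finite set. -/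
def tvDist {Ω : Type*} [Fintype Ω] (p r : Ω → ℝ) : ℝ := (∑ σ, |p σ - r σ|) / 2

open Matrix

section Coupling

variable {Ω : Type*} [Fintype Ω]

def IsLipschitzWrt (d : Ω → Ω → ℝ) (ℓ : ℝ) (f : Ω → ℝ) : Prop :=
  ∀ σ τ, |f σ - f τ| ≤ ℓ * d σ τ

lemma IsCoupling.dotProduct_left {γ : Ω × Ω → ℝ} {p r : Ω → ℝ} (hγ : IsCoupling γ p r)
    (f : Ω → ℝ) : p ⬝ᵥ f = ∑ x, γ x * f x.1 := by
  simp_rw [dotProduct, ← hγ.2.1, Finset.sum_mul, Fintype.sum_prod_type]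

lemma IsCoupling.dotProduct_right {γ : Ω × Ω → ℝ} {p r : Ω → ℝ} (hγ : IsCoupling γ p r)
    (f : Ω → ℝ) : r ⬝ᵥ f = ∑ x, γ x * f x.2 := by
  simp_rw [dotProduct, ← hγ.2.2, Finset.sum_mul, Fintype.sum_prod_type_right]

lemma IsCoupling.abs_dotProduct_sub_le {γ : Ω × Ω → ℝ} {p r f : Ω → ℝ} (hγ : IsCoupling γ p r)
    {D : Ω → Ω → ℝ} (hf : ∀ a b, |f a - f b| ≤ D a b) :
    |p ⬝ᵥ f - r ⬝ᵥ f| ≤ ∑ x, γ x * D x.1 x.2 := by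
  rw [hγ.dotProduct_left, hγ.dotProduct_right, ← Finset.sum_sub_distrib]
  refine (Finset.abs_sum_le_sum_abs _ _).trans (Finset.sum_le_sum fun x _ => ?_)
  rw [← mul_sub, abs_mul, abs_of_nonneg (hγ.1 x)]
  exact mul_le_mul_of_nonneg_left (hf _ _) (hγ.1 x)

lemma isCoupling_prod {μ ν : Ω → ℝ} (hμ : IsProbMeasure μ) (hν : IsProbMeasure ν) :
    IsCoupling (fun x => μ x.1 * ν x.2) μ ν :=
  ⟨fun x => mul_nonneg (hμ.1 _) (hν.1 _), fun a => by simp only [← Finset.mul_sum, hν.2, mul_one],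
    fun b => by simp only [← Finset.sum_mul, hμ.2, one_mul]⟩

lemma IsProbMeasure.abs_dotProduct_sub_le {μ ν f : Ω → ℝ} (hμ : IsProbMeasure μ)
    (hν : IsProbMeasure ν) {C : ℝ} (hf : ∀ a b, |f a - f b| ≤ C) :
    |μ ⬝ᵥ f - ν ⬝ᵥ f| ≤ C := by
  have h := (isCoupling_prod hμ hν).abs_dotProduct_sub_le (D := fun _ _ => C) hf
  simpa only [Fintype.sum_prod_type, ← Finset.sum_mul, ← Finset.mul_sum, hμ.2, hν.2, mul_one,
    one_mul] using h

lemma IsLipschitzWrt.mulVec {P : Matrix Ω Ω ℝ} {d : Ω → Ω → ℝ} {κ ℓ : ℝ} {f : Ω → ℝ}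
    (hP : ∀ σ τ, ∃ γ : Ω × Ω → ℝ, IsCoupling γ (P σ) (P τ) ∧
      ∑ x, γ x * d x.1 x.2 ≤ κ * d σ τ)
    (hf : IsLipschitzWrt d ℓ f) (hℓ : 0 ≤ ℓ) : IsLipschitzWrt d (κ * ℓ) (P *ᵥ f) := by
  intro σ τ
  obtain ⟨γ, hγ, hγd⟩ := hP σ τ
  calc |(P *ᵥ f) σ - (P *ᵥ f) τ| ≤ ∑ x, γ x * (ℓ * d x.1 x.2) := hγ.abs_dotProduct_sub_le (hf · ·)
    _ = ℓ * ∑ x, γ x * d x.1 x.2 := by rw [Finset.mul_sum]; simp only [mul_left_comm]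
    _ ≤ ℓ * (κ * d σ τ) := mul_le_mul_of_nonneg_left hγd hℓ
    _ = κ * ℓ * d σ τ := by ring

lemma abs_sum_mul_le_of_sum_eq_zero {d f : Ω → ℝ} (hd : ∑ x, d x = 0) {c : ℝ}
    (hf : ∀ a b, |f a - f b| ≤ c) : |∑ x, d x * f x| ≤ (∑ x, |d x|) / 2 * c := by
  rcases isEmpty_or_nonempty Ω with hΩ | hΩ
  · simp
  obtain ⟨a, -, ha⟩ := Finset.exists_max_image Finset.univ f Finset.univ_nonempty
  obtain ⟨b, -, hb⟩ := Finset.exists_min_image Finset.univ f Finset.univ_nonempty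
  -- Since `∑ d = 0`, `f` may be centred at the midpoint of its range, where `|f| ≤ c / 2`.
  have hcentre : ∀ x, |f x - (f a + f b) / 2| ≤ c / 2 := by
    intro x
    have hab := (le_abs_self _).trans (hf a b)
    rw [abs_le]
    constructor <;> linarith [ha x (Finset.mem_univ x), hb x (Finset.mem_univ x)]
  calc |∑ x, d x * f x| = |∑ x, d x * (f x - (f a + f b) / 2)| := by
        simp_rw [mul_sub, Finset.sum_sub_distrib, ← Finset.sum_mul, hd, zero_mul, sub_zero]
    _ ≤ ∑ x, |d x| * (c / 2) := by
        refine (Finset.abs_sum_le_sum_abs _ _).trans (Finset.sum_le_sum fun x _ => ?_)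
        rw [abs_mul]
        exact mul_le_mul_of_nonneg_left (hcentre x) (abs_nonneg _)
    _ = (∑ x, |d x|) / 2 * c := by rw [← Finset.sum_mul]; ring

lemma abs_dotProduct_sub_le_tvDist_mul {p r f : Ω → ℝ} (hpr : ∑ x, p x = ∑ x, r x) {c : ℝ}
    (hf : ∀ a b, |f a - f b| ≤ c) : |p ⬝ᵥ f - r ⬝ᵥ f| ≤ tvDist p r * c := by
  rw [← sub_dotProduct]
  exact abs_sum_mul_le_of_sum_eq_zero (by simp [Finset.sum_sub_distrib, hpr]) hf

lemma vecMul_eq_self_of_reversible {P : Matrix Ω Ω ℝ} {π : Ω → ℝ}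
    (hrev : ∀ σ τ, π σ * P σ τ = π τ * P τ σ) (hrow : ∀ σ, ∑ τ, P σ τ = 1) : π ᵥ* P = π := by
  funext τ
  change ∑ σ, π σ * P σ τ = π τ
  rw [Finset.sum_congr rfl fun σ _ => hrev σ τ, ← Finset.mul_sum, hrow, mul_one]

end Coupling

section Comparison

variable {Ω : Type*} [Fintype Ω] {P : Matrix Ω Ω ℝ} {μ ν : Ω → ℝ} {d : Ω → Ω → ℝ} {κ D ε : ℝ}

lemma abs_dotProduct_sub_le_geom_add_pow (hμ : μ ᵥ* P = μ) (hκ0 : 0 ≤ κ) (hκ1 : κ < 1)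
    (hP : ∀ ℓ f, 0 ≤ ℓ → IsLipschitzWrt d ℓ f → IsLipschitzWrt d (κ * ℓ) (P *ᵥ f))
    (hD : ∀ ℓ f, 0 ≤ ℓ → IsLipschitzWrt d ℓ f → |μ ⬝ᵥ f - ν ⬝ᵥ f| ≤ ℓ * D)
    (hε : ∀ ℓ f, 0 ≤ ℓ → IsLipschitzWrt d ℓ f → |ν ⬝ᵥ f - ν ⬝ᵥ (P *ᵥ f)| ≤ ℓ * ε) (n : ℕ) :
    ∀ ℓ f, 0 ≤ ℓ → IsLipschitzWrt d ℓ f →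
      |μ ⬝ᵥ f - ν ⬝ᵥ f| ≤ ℓ * ε * (1 - κ ^ n) / (1 - κ) + κ ^ n * ℓ * D := by
  induction n with
  | zero => intro ℓ f hℓ hf; simpa using hD ℓ f hℓ hf
  | succ n ih =>
    intro ℓ f hℓ hf
    have hPf := ih (κ * ℓ) (P *ᵥ f) (mul_nonneg hκ0 hℓ) (hP ℓ f hℓ hf)
    have hstep := hε ℓ f hℓ hf
    rw [abs_sub_comm] at hstep
    rw [dotProduct_mulVec, hμ] at hPf
    have h1κ : 1 - κ ≠ 0 := by linarith
    calc |μ ⬝ᵥ f - ν ⬝ᵥ f| ≤ |μ ⬝ᵥ f - ν ⬝ᵥ (P *ᵥ f)| + |ν ⬝ᵥ (P *ᵥ f) - ν ⬝ᵥ f| :=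
          abs_sub_le _ _ _
      _ ≤ κ * ℓ * ε * (1 - κ ^ n) / (1 - κ) + κ ^ n * (κ * ℓ) * D + ℓ * ε :=
          add_le_add hPf hstep
      _ = ℓ * ε * (1 - κ ^ (n + 1)) / (1 - κ) + κ ^ (n + 1) * ℓ * D := by
          field_simp
          ring

lemma abs_dotProduct_sub_le_of_contracting (hμ : μ ᵥ* P = μ) (hκ0 : 0 ≤ κ) (hκ1 : κ < 1)
    (hP : ∀ ℓ f, 0 ≤ ℓ → IsLipschitzWrt d ℓ f → IsLipschitzWrt d (κ * ℓ) (P *ᵥ f))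
    (hD : ∀ ℓ f, 0 ≤ ℓ → IsLipschitzWrt d ℓ f → |μ ⬝ᵥ f - ν ⬝ᵥ f| ≤ ℓ * D)
    (hε : ∀ ℓ f, 0 ≤ ℓ → IsLipschitzWrt d ℓ f → |ν ⬝ᵥ f - ν ⬝ᵥ (P *ᵥ f)| ≤ ℓ * ε)
    {ℓ : ℝ} {f : Ω → ℝ} (hℓ : 0 ≤ ℓ) (hf : IsLipschitzWrt d ℓ f) :
    |μ ⬝ᵥ f - ν ⬝ᵥ f| ≤ ℓ * ε / (1 - κ) := by
  have hpow := tendsto_pow_atTop_nhds_zero_of_lt_one hκ0 hκ1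
  have hlim : Filter.Tendsto (fun n : ℕ => ℓ * ε * (1 - κ ^ n) / (1 - κ) + κ ^ n * ℓ * D)
      Filter.atTop (nhds (ℓ * ε / (1 - κ))) := by
    simpa using (((hpow.const_sub 1).const_mul _).div_const _).add ((hpow.mul_const _).mul_const _)
  exact ge_of_tendsto' hlim fun n =>
    abs_dotProduct_sub_le_geom_add_pow hμ hκ0 hκ1 hP hD hε n ℓ f hℓ hf

end Comparison

section Glauber

variable [Fintype V] {q : ℕ}

lemma sum_ite_eqOn_compl_eq_sum_update (σ : V → Fin q) (v : V) (F : (V → Fin q) → ℝ) :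
    ∑ τ, (if ∀ w, w ≠ v → τ w = σ w then F τ else 0) = ∑ k, F (Function.update σ v k) := by
  have himage : Finset.univ.filter (fun τ : V → Fin q => ∀ w, w ≠ v → τ w = σ w) =
      Finset.univ.image (Function.update σ v) := by
    ext τ
    simp [eq_comm (b := τ), Function.eq_update_iff]
  rw [← Finset.sum_filter, himage,
    Finset.sum_image fun _ _ _ _ h => Function.update_injective σ v h]

lemma glauber_mulVec (μ f : (V → Fin q) → ℝ) (σ : V → Fin q) :
    (glauber μ *ᵥ f) σ =
      (Fintype.card V : ℝ)⁻¹ * ∑ v, ∑ k, condSpin μ v σ k * f (Function.update σ v k) := by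
  change ∑ τ, glauber μ σ τ * f τ = _
  simp_rw [glauber, mul_assoc, ← Finset.mul_sum, Finset.sum_mul, ite_mul, zero_mul]
  rw [Finset.sum_comm]
  congr 1
  refine Finset.sum_congr rfl fun v _ => ?_
  rw [sum_ite_eqOn_compl_eq_sum_update σ v (fun τ => condSpin μ v σ (τ v) * f τ)]
  simp only [Function.update_self]

lemma condSpin_eq_of_eqOn_compl {μ : (V → Fin q) → ℝ} {v : V} {σ τ : V → Fin q}
    (hστ : ∀ w, w ≠ v → τ w = σ w) : condSpin μ v τ = condSpin μ v σ := by
  have hupd : ∀ k, Function.update τ v k = Function.update σ v k := fun k => by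
    rw [Function.eq_update_iff]
    exact ⟨Function.update_self .., fun w hw => by rw [Function.update_of_ne hw, hστ w hw]⟩
  funext k
  simp only [condSpin, hupd]

lemma glauber_reversible (μ : (V → Fin q) → ℝ) (σ τ : V → Fin q) :
    μ σ * glauber μ σ τ = μ τ * glauber μ τ σ := by
  simp only [glauber, mul_left_comm (μ _), Finset.mul_sum]
  refine Finset.sum_congr rfl fun v _ => congrArg _ ?_
  by_cases hστ : ∀ w, w ≠ v → τ w = σ w
  · have hτσ : ∀ w, w ≠ v → σ w = τ w := fun w hw => (hστ w hw).symm
    have hτ : Function.update σ v (τ v) = τ := (Function.eq_update_iff.2 ⟨rfl, hστ⟩).symm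
    rw [if_pos hστ, if_pos hτσ, condSpin_eq_of_eqOn_compl hστ]
    simp only [condSpin, hτ, Function.update_eq_self]
    ring
  · rw [if_neg hστ, if_neg fun h => hστ fun w hw => (h w hw).symm, mul_zero, mul_zero]

lemma sum_condSpin [Nonempty (Fin q)] {μ : (V → Fin q) → ℝ} (hμ : ∀ σ, 0 < μ σ) (v : V)
    (σ : V → Fin q) : ∑ k, condSpin μ v σ k = 1 := by
  simp only [condSpin, ← Finset.sum_div]
  exact div_self (Finset.sum_pos (fun _ _ => hμ _) Finset.univ_nonempty).ne'

lemma sum_glauber [Nonempty V] [Nonempty (Fin q)] {μ : (V → Fin q) → ℝ} (hμ : ∀ σ, 0 < μ σ)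
    (σ : V → Fin q) : ∑ τ, glauber μ σ τ = 1 := by
  have h := glauber_mulVec μ (fun _ => 1) σ
  simp only [mulVec, dotProduct, mul_one, sum_condSpin hμ, Finset.sum_const, Finset.card_univ,
    nsmul_eq_mul] at h
  rw [h, inv_mul_cancel₀ (by positivity)]

lemma vecMul_glauber_self [Nonempty V] [Nonempty (Fin q)] {μ : (V → Fin q) → ℝ}
    (hμ : ∀ σ, 0 < μ σ) : μ ᵥ* glauber μ = μ :=
  vecMul_eq_self_of_reversible (glauber_reversible μ) (sum_glauber hμ)

end Glauber

section Hamming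

variable [Fintype V] {q : ℕ}

lemma hamming_le_card (σ τ : V → Fin q) : hamming σ τ ≤ Fintype.card V := by
  unfold hamming
  exact_mod_cast Finset.card_filter_le _ _

lemma hamming_update_update_le_one (σ : V → Fin q) (v : V) (k k' : Fin q) :
    hamming (Function.update σ v k) (Function.update σ v k') ≤ 1 := by
  have hsub : Finset.univ.filter (fun w => Function.update σ v k w ≠ Function.update σ v k' w)
      ⊆ {v} := fun w hw => by
    by_contra hwv
    simp_all [Function.update_of_ne (Finset.mem_singleton.not.1 hwv)]
  unfold hamming
  exact_mod_cast (Finset.card_le_card hsub).trans (Finset.card_singleton v).le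

lemma IsLipschitzWrt.abs_sub_update_le {ℓ : ℝ} {f : (V → Fin q) → ℝ}
    (hf : IsLipschitzWrt hamming ℓ f) (hℓ : 0 ≤ ℓ) (σ : V → Fin q) (v : V) (k k' : Fin q) :
    |f (Function.update σ v k) - f (Function.update σ v k')| ≤ ℓ :=
  (hf _ _).trans (mul_le_of_le_one_right hℓ (hamming_update_update_le_one σ v k k'))

lemma abs_sub_le_Lv (h : (V → Fin q) → ℝ) {v : V} {σ τ : V → Fin q}
    (hστ : ∀ w, w ≠ v → σ w = τ w) : |h σ - h τ| ≤ Lv h v := by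
  refine le_csSup ?_ ⟨σ, τ, hστ, rfl⟩
  refine ((Set.finite_range fun x : (V → Fin q) × (V → Fin q) => |h x.1 - h x.2|).subset
    ?_).bddAbove
  rintro _ ⟨σ, τ, -, rfl⟩
  exact ⟨(σ, τ), rfl⟩

lemma Lv_le_Lnorm (h : (V → Fin q) → ℝ) (v : V) : Lv h v ≤ Lnorm h := by
  refine le_csSup (((Set.finite_range fun v => Lv h v).subset ?_).bddAbove) ⟨v, rfl⟩
  rintro _ ⟨v, rfl⟩
  exact ⟨v, rfl⟩

lemma Lnorm_nonneg (h : (V → Fin q) → ℝ) : 0 ≤ Lnorm h :=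
  Real.sSup_nonneg <| by
    rintro _ ⟨v, rfl⟩
    exact Real.sSup_nonneg <| by
      rintro _ ⟨σ, τ, -, rfl⟩
      exact abs_nonneg _

lemma abs_sub_le_Lnorm_mul_card (h : (V → Fin q) → ℝ) (s : Finset V) :
    ∀ σ τ : V → Fin q, (∀ w, w ∉ s → σ w = τ w) → |h σ - h τ| ≤ Lnorm h * s.card := by
  induction s using Finset.induction_on with
  | empty =>
    intro σ τ hστ
    simp [funext fun w => hστ w (Finset.notMem_empty w)]
  | insert v s hv ih =>
    intro σ τ hστ
    set σ' := Function.update σ v (τ v) with hσ'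
    have hσσ' : |h σ - h σ'| ≤ Lnorm h :=
      (abs_sub_le_Lv h fun w hw => (Function.update_of_ne hw _ _).symm).trans (Lv_le_Lnorm h v)
    have hσ'τ : |h σ' - h τ| ≤ Lnorm h * s.card := ih σ' τ fun w hw => by
      by_cases hwv : w = v
      · rw [hwv, hσ', Function.update_self]
      · rw [hσ', Function.update_of_ne hwv, hστ w (by simp [hwv, hw])]
    calc |h σ - h τ| ≤ |h σ - h σ'| + |h σ' - h τ| := abs_sub_le _ _ _
      _ ≤ Lnorm h * (insert v s).card := by
        rw [Finset.card_insert_of_notMem hv]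
        push_cast
        linarith

lemma isLipschitzWrt_hamming_Lnorm (h : (V → Fin q) → ℝ) :
    IsLipschitzWrt hamming (Lnorm h) h := fun σ τ =>
  abs_sub_le_Lnorm_mul_card h _ σ τ fun w hw => by simpa using hw

end Hamming

section Discrepancy

variable [Fintype V] {q : ℕ} [Nonempty (Fin q)] {μ ν : (V → Fin q) → ℝ}

lemma abs_glauber_mulVec_sub_le (hμ : ∀ σ, 0 < μ σ) (hν : ∀ σ, 0 < ν σ)
    {f : (V → Fin q) → ℝ} {c : ℝ}
    (hf : ∀ σ v k k', |f (Function.update σ v k) - f (Function.update σ v k')| ≤ c)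
    (σ : V → Fin q) :
    |(glauber ν *ᵥ f) σ - (glauber μ *ᵥ f) σ| ≤
      (Fintype.card V : ℝ)⁻¹ * (∑ v, tvDist (condSpin μ v σ) (condSpin ν v σ)) * c := by
  rw [glauber_mulVec, glauber_mulVec, ← mul_sub, ← Finset.sum_sub_distrib, abs_mul,
    abs_of_nonneg (by positivity), mul_assoc, Finset.sum_mul]
  gcongr
  refine (Finset.abs_sum_le_sum_abs _ _).trans (Finset.sum_le_sum fun v _ => ?_)
  rw [abs_sub_comm]
  exact abs_dotProduct_sub_le_tvDist_mul (f := fun k => f (Function.update σ v k))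
    (by rw [sum_condSpin hμ, sum_condSpin hν]) (hf σ v)

lemma abs_dotProduct_sub_dotProduct_glauber_mulVec_le [Nonempty V] (hμ : ∀ σ, 0 < μ σ)
    (hν : ∀ σ, 0 < ν σ) {f : (V → Fin q) → ℝ} {c : ℝ}
    (hf : ∀ σ v k k', |f (Function.update σ v k) - f (Function.update σ v k')| ≤ c) :
    |ν ⬝ᵥ f - ν ⬝ᵥ (glauber μ *ᵥ f)| ≤
      c * ((Fintype.card V : ℝ)⁻¹ *
        ∑ σ, ν σ * ∑ v, tvDist (condSpin μ v σ) (condSpin ν v σ)) := by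
  have hstat : ν ⬝ᵥ f = ν ⬝ᵥ (glauber ν *ᵥ f) :=
    (congrArg (· ⬝ᵥ f) (vecMul_glauber_self hν).symm).trans (dotProduct_mulVec _ _ _).symm
  rw [hstat, ← dotProduct_sub]
  calc |∑ σ, ν σ * (glauber ν *ᵥ f - glauber μ *ᵥ f) σ|
      ≤ ∑ σ, ν σ * ((Fintype.card V : ℝ)⁻¹ *
          (∑ v, tvDist (condSpin μ v σ) (condSpin ν v σ)) * c) := by
        refine (Finset.abs_sum_le_sum_abs _ _).trans (Finset.sum_le_sum fun σ _ => ?_)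
        rw [abs_mul, abs_of_pos (hν σ)]
        exact mul_le_mul_of_nonneg_left (abs_glauber_mulVec_sub_le hμ hν hf σ) (hν σ).le
    _ = _ := by
        rw [Finset.mul_sum, Finset.mul_sum]
        exact Finset.sum_congr rfl fun σ _ => by ring

end Discrepancy

theorem stmt7_general [Fintype V] [Nonempty V] (q : ℕ)
    (μ ν : (V → Fin q) → ℝ) (hμ : IsProbMeasure μ) (hν : IsProbMeasure ν)
    (hμpos : ∀ σ, 0 < μ σ) (hνpos : ∀ σ, 0 < ν σ)
    (κ : ℝ) (hκ0 : 0 ≤ κ) (hκ1 : κ < 1)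
    (hcontr : ∀ σ τ : V → Fin q, ∃ γ : (V → Fin q) × (V → Fin q) → ℝ,
      IsCoupling γ (glauber μ σ) (glauber μ τ) ∧
      ∑ p : (V → Fin q) × (V → Fin q), γ p * hamming p.1 p.2 ≤ κ * hamming σ τ)
    (h : (V → Fin q) → ℝ) :
    |(∑ σ, μ σ * h σ) - ∑ σ, ν σ * h σ| ≤
      Lnorm h / (Fintype.card V * (1 - κ)) *
        ∑ σ, ν σ * ∑ v : V, tvDist (condSpin μ v σ) (condSpin ν v σ) := by
  obtain ⟨σ₀, -, -⟩ := Finset.exists_ne_zero_of_sum_ne_zero (hμ.2 ▸ one_ne_zero)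
  have : Nonempty (Fin q) := ⟨σ₀ (Classical.arbitrary V)⟩
  have hdiam : ∀ ℓ f, 0 ≤ ℓ → IsLipschitzWrt hamming ℓ f →
      |μ ⬝ᵥ f - ν ⬝ᵥ f| ≤ ℓ * Fintype.card V := fun ℓ f hℓ hf =>
    hμ.abs_dotProduct_sub_le hν fun σ τ =>
      (hf σ τ).trans (mul_le_mul_of_nonneg_left (hamming_le_card σ τ) hℓ)
  calc |μ ⬝ᵥ h - ν ⬝ᵥ h|
      ≤ Lnorm h * ((Fintype.card V : ℝ)⁻¹ *
          ∑ σ, ν σ * ∑ v, tvDist (condSpin μ v σ) (condSpin ν v σ)) / (1 - κ) :=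
        abs_dotProduct_sub_le_of_contracting (vecMul_glauber_self hμpos) hκ0 hκ1
          (fun _ _ hℓ hf => hf.mulVec hcontr hℓ) hdiam
          (fun _ _ hℓ hf => abs_dotProduct_sub_dotProduct_glauber_mulVec_le hμpos hνpos
            (hf.abs_sub_update_le hℓ))
          (Lnorm_nonneg h) (isLipschitzWrt_hamming_Lnorm h)
    _ = _ := by
        have : 1 - κ ≠ 0 := by linarith
        field_simp

theorem stmt7 [Fintype V] [Nonempty V] (q : ℕ) (hq : 3 ≤ q)
    (μ ν : (V → Fin q) → ℝ) (hμ : IsProbMeasure μ) (hν : IsProbMeasure ν)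
    (hμpos : ∀ σ, 0 < μ σ) (hνpos : ∀ σ, 0 < ν σ)
    (κ : ℝ) (hκ0 : 0 ≤ κ) (hκ1 : κ < 1)
    (hcontr : ∀ σ τ : V → Fin q, ∃ γ : (V → Fin q) × (V → Fin q) → ℝ,
      IsCoupling γ (glauber μ σ) (glauber μ τ) ∧
      ∑ p : (V → Fin q) × (V → Fin q), γ p * hamming p.1 p.2 ≤ κ * hamming σ τ)
    (h : (V → Fin q) → ℝ) :
    |(∑ σ, μ σ * h σ) - ∑ σ, ν σ * h σ| ≤
      Lnorm h / (Fintype.card V * (1 - κ)) *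
        ∑ σ, ν σ * ∑ v : V, tvDist (condSpin μ v σ) (condSpin ν v σ) :=
  stmt7_general q μ ν hμ hν hμpos hνpos κ hκ0 hκ1 hcontr h
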